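/- arXiv:1310.3794 — 7 statements merged into one kernel-verified Lean document; each statement's English description precedes it below -/
import Mathlib

section
/- If X_1,...,X_9 are self-adjoint operators (matrices) on a finite-dimensional complex Hilbert space with X_j^2 = I for all j, such that the operators in each row and each column pairwise commute, and X_1X_2X_3 = I, X_4X_5X_6 = I, X_7X_8X_9 = I, X_1X_4X_7 = I, X_2X_5X_8 = I, X_3X_6X_9 = -I (rows/columns of the 3×3 arrangement), then X_2X_4 = -X_4X_2. -/
open Matrix

/-- Lemma (anti-commutativity from the magic square): any operator assignment of the
magic square constraint system satisfies `X₂X₄ = -X₄X₂`.  Cells are indexed `0,…,8`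
row by row; two cells share a row iff their indices have equal quotient by 3, and
share a column iff equal remainder mod 3. -/
theorem magic_square_anticommute {d : ℕ}
    (X : Fin 9 → Matrix (Fin d) (Fin d) ℂ)
    (hsa : ∀ j, (X j).IsHermitian)
    (hsq : ∀ j, X j * X j = 1)
    (hcomm : ∀ j k : Fin 9, (j.val / 3 = k.val / 3 ∨ j.val % 3 = k.val % 3) →
      Commute (X j) (X k))
    (hr1 : X 0 * X 1 * X 2 = 1) (hr2 : X 3 * X 4 * X 5 = 1)
    (hr3 : X 6 * X 7 * X 8 = 1)
    (hc1 : X 0 * X 3 * X 6 = 1) (hc2 : X 1 * X 4 * X 7 = 1)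
    (hc3 : X 2 * X 5 * X 8 = -1) :
    X 1 * X 3 = -(X 3 * X 1) := by
  have sq : ∀ j (z : Matrix (Fin d) (Fin d) ℂ), X j * (X j * z) = z := fun j z => by
    rw [← mul_assoc, hsq, one_mul]
  have swap : ∀ j k : Fin 9, (j.val / 3 = k.val / 3 ∨ j.val % 3 = k.val % 3) →
      ∀ z : Matrix (Fin d) (Fin d) ℂ, X j * (X k * z) = X k * (X j * z) := fun j k h z => by
    rw [← mul_assoc, (hcomm j k h).eq, mul_assoc]
  have e2 : X 0 * X 1 = X 2 := by
    have h := congrArg (· * X 2) hr1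
    simpa [mul_assoc, hsq] using h
  have e5 : X 3 * X 4 = X 5 := by
    have h := congrArg (· * X 5) hr2
    simpa [mul_assoc, hsq] using h
  have e8 : X 6 * X 7 = X 8 := by
    have h := congrArg (· * X 8) hr3
    simpa [mul_assoc, hsq] using h
  have e6 : X 0 * X 3 = X 6 := by
    have h := congrArg (· * X 6) hc1
    simpa [mul_assoc, hsq] using h
  have e7 : X 1 * X 4 = X 7 := by
    have h := congrArg (· * X 7) hc2
    simpa [mul_assoc, hsq] using h
  have e8' : X 1 * X 4 * (X 0 * X 3) = X 8 := by
    rw [e7, e6, ← (hcomm 6 7 (by decide)).eq]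
    exact e8
  have E : X 0 * X 1 * (X 3 * X 4) * (X 1 * X 4 * (X 0 * X 3)) = -1 := by
    rw [e2, e5, e8']; exact hc3
  simp only [mul_assoc] at E
  rw [swap 4 1 (by decide) (X 4 * (X 0 * X 3))] at E
  rw [sq 4 (X 0 * X 3)] at E
  rw [swap 1 0 (by decide) (X 3)] at E
  rw [swap 3 0 (by decide) (X 1 * X 3)] at E
  rw [swap 1 0 (by decide) (X 3 * (X 1 * X 3))] at E
  rw [sq 0] at E
  have h2 := congrArg (· * (X 3 * X 1)) E
  simpa [mul_assoc, sq, hsq] using h2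
end

section
/- Let u, v be adjacent vertices of a graph with a 3-coloring operator assignment, i.e., projections u_0,u_1,u_2 and v_0,v_1,v_2 on a finite-dimensional Hilbert space with u_0+u_1+u_2 = I, v_0+v_1+v_2 = I, the u_α pairwise commuting, the v_α pairwise commuting, and u_α v_α = v_α u_α = 0 for α = 0,1,2. Then u_α v_β = v_β u_α for all α, β ∈ {0,1,2}. -/
/-!
Fix colours `α ≠ β` and let `γ` be the third one. The idempotents `u_γ`, `u_α` are
orthogonal because their sum `1 - u_β` is again idempotent. Since `u_γ u_α = 0` and
`u_α = (v_α + v_β + v_γ) u_α`, the edge relations `v_α u_α = 0 = u_γ v_γ` leave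
`u_γ v_β u_α = 0`; together with `u_β v_β = 0` this gives
`v_β u_α = (u_α + u_β + u_γ) v_β u_α = u_α v_β u_α`, and taking adjoints shows that
`u_α v_β` equals the same self-adjoint element.
-/

variable {R : Type*}

theorem IsIdempotentElem.mul_eq_zero_of_add_add_eq_one [Ring R] [IsAddTorsionFree R]
    {p q r : R} (hp : IsIdempotentElem p) (hq : IsIdempotentElem q) (hr : IsIdempotentElem r)
    (h : p + q + r = 1) : p * q = 0 :=
  hp.mul_eq_zero_of_anticommute <| (hp.add_iff hq).mp <| by
    rw [eq_sub_of_add_eq h]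
    exact hr.one_sub

theorem IsSelfAdjoint.commute_of_mul_eq_mul_mul [Semigroup R] [StarMul R] {p q : R}
    (hp : IsSelfAdjoint p) (hq : IsSelfAdjoint q) (h : q * p = p * q * p) : Commute p q := by
  have h_star : p * q = p * q * p := by
    simpa only [star_mul, hp.star_eq, hq.star_eq, mul_assoc] using congrArg star h
  exact h_star.trans h.symm

theorem Fin.exists_perm_apply_zero_apply_one {i j : Fin 3} (hij : i ≠ j) :
    ∃ σ : Equiv.Perm (Fin 3), σ 0 = i ∧ σ 1 = j := by
  revert i j
  decide

section ThreeColoring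

variable [Ring R] [StarRing R] [IsAddTorsionFree R] {u v : Fin 3 → R}

theorem commute_zero_one_of_three_coloring
    (hu_sa : IsSelfAdjoint (u 0)) (hv_sa : IsSelfAdjoint (v 1))
    (hu_idem : ∀ i, IsIdempotentElem (u i)) (hu_sum : ∑ i, u i = 1) (hv_sum : ∑ i, v i = 1)
    (h_edge : ∀ i, u i * v i = 0 ∧ v i * u i = 0) : Commute (u 0) (v 1) := by
  rw [Fin.sum_univ_three] at hu_sum hv_sum
  have hu20 : u 2 * u 0 = 0 :=
    (hu_idem 2).mul_eq_zero_of_add_add_eq_one (hu_idem 0) (hu_idem 1) <| by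
      rw [← hu_sum]; abel
  have hu2v1u0 : u 2 * v 1 * u 0 = 0 := by
    calc u 2 * v 1 * u 0
        = u 2 * (v 0 + v 1 + v 2) * u 0 - u 2 * (v 0 * u 0) - u 2 * v 2 * u 0 := by noncomm_ring
      _ = 0 := by rw [hv_sum, mul_one, hu20, (h_edge 0).2, (h_edge 2).1]; simp
  refine hu_sa.commute_of_mul_eq_mul_mul hv_sa ?_
  calc v 1 * u 0
      = (u 0 + u 1 + u 2) * v 1 * u 0 := by rw [hu_sum, one_mul]
    _ = u 0 * v 1 * u 0 + u 1 * v 1 * u 0 + u 2 * v 1 * u 0 := by noncomm_ring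
    _ = u 0 * v 1 * u 0 := by rw [(h_edge 1).1, hu2v1u0]; simp

theorem commute_of_three_coloring
    (hu_sa : ∀ i, IsSelfAdjoint (u i)) (hv_sa : ∀ i, IsSelfAdjoint (v i))
    (hu_idem : ∀ i, IsIdempotentElem (u i)) (hu_sum : ∑ i, u i = 1) (hv_sum : ∑ i, v i = 1)
    (h_edge : ∀ i, u i * v i = 0 ∧ v i * u i = 0) (i j : Fin 3) : Commute (u i) (v j) := by
  by_cases hij : i = j
  · subst hij
    exact (h_edge i).1.trans (h_edge i).2.symm
  obtain ⟨σ, rfl, rfl⟩ := Fin.exists_perm_apply_zero_apply_one hij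
  exact commute_zero_one_of_three_coloring (u := u ∘ σ) (v := v ∘ σ) (hu_sa _) (hv_sa _)
    (fun i => hu_idem (σ i)) (by rwa [Function.comp_def, Equiv.sum_comp σ])
    (by rwa [Function.comp_def, Equiv.sum_comp σ]) (fun i => h_edge (σ i))

end ThreeColoring

theorem coloring_adjacent_commute_general {d : ℕ}
    (u v : Fin 3 → Matrix (Fin d) (Fin d) ℂ)
    (hu_sa : ∀ α, (u α).IsHermitian) (hv_sa : ∀ α, (v α).IsHermitian)
    (hu_proj : ∀ α, u α * u α = u α)
    (hu_sum : u 0 + u 1 + u 2 = 1) (hv_sum : v 0 + v 1 + v 2 = 1)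
    (h_edge : ∀ α, u α * v α = 0 ∧ v α * u α = 0) :
    ∀ α β, u α * v β = v β * u α := by
  have : IsAddTorsionFree (Matrix (Fin d) (Fin d) ℂ) := .of_module_rat _
  exact commute_of_three_coloring (fun α => (hu_sa α).isSelfAdjoint)
    (fun α => (hv_sa α).isSelfAdjoint) hu_proj (by rwa [Fin.sum_univ_three])
    (by rwa [Fin.sum_univ_three]) h_edge

/-- Lemma (link): in a 3-coloring operator assignment, the projections assigned to
adjacent vertices pairwise commute across all colors. -/
theorem coloring_adjacent_commute {d : ℕ}
    (u v : Fin 3 → Matrix (Fin d) (Fin d) ℂ)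
    (hu_sa : ∀ α, (u α).IsHermitian) (hv_sa : ∀ α, (v α).IsHermitian)
    (hu_proj : ∀ α, u α * u α = u α) (hv_proj : ∀ α, v α * v α = v α)
    (hu_sum : u 0 + u 1 + u 2 = 1) (hv_sum : v 0 + v 1 + v 2 = 1)
    (hu_comm : ∀ α β, Commute (u α) (u β))
    (hv_comm : ∀ α β, Commute (v α) (v β))
    (h_edge : ∀ α, u α * v α = 0 ∧ v α * u α = 0) :
    ∀ α β, u α * v β = v β * u α :=
  coloring_adjacent_commute_general u v hu_sa hv_sa hu_proj hu_sum hv_sum h_edge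
end

section
/- Let x, y, u_1, u_2, u_3, u_4 be self-adjoint projections on a finite-dimensional Hilbert space satisfying x + u_1 + u_4 = I, y + u_2 + u_4 = I, u_1 + u_2 + u_3 = I, and such that each pair of projections appearing in a common equation commutes (i.e., [x,u_1]=[x,u_4]=[u_1,u_4]=[y,u_2]=[y,u_4]=[u_2,u_4]=[u_1,u_2]=[u_1,u_3]=[u_2,u_3]=0). Then xy = yx. -/
open Matrix

/-- Lemma (commutativity gadget for 1-in-3-SAT*): if projections `x, y, u₁, u₂, u₃, u₄`
satisfy the three 1-in-3 constraints `x + u₁ + u₄ = I`, `y + u₂ + u₄ = I`,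
`u₁ + u₂ + u₃ = I`, where the projections occurring in a common constraint commute,
then `xy = yx`. -/
theorem one_in_three_commutativity_gadget {d : ℕ}
    (x y u₁ u₂ u₃ u₄ : Matrix (Fin d) (Fin d) ℂ)
    (hx : x.IsHermitian) (hy : y.IsHermitian) (hu₁ : u₁.IsHermitian)
    (hu₂ : u₂.IsHermitian) (hu₃ : u₃.IsHermitian) (hu₄ : u₄.IsHermitian)
    (hx2 : x * x = x) (hy2 : y * y = y) (hu₁2 : u₁ * u₁ = u₁)
    (hu₂2 : u₂ * u₂ = u₂) (hu₃2 : u₃ * u₃ = u₃) (hu₄2 : u₄ * u₄ = u₄)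
    (e1 : x + u₁ + u₄ = 1) (e2 : y + u₂ + u₄ = 1) (e3 : u₁ + u₂ + u₃ = 1)
    (c1 : Commute x u₁) (c2 : Commute x u₄) (c3 : Commute u₁ u₄)
    (c4 : Commute y u₂) (c5 : Commute y u₄) (c6 : Commute u₂ u₄)
    (c7 : Commute u₁ u₂) (c8 : Commute u₁ u₃) (c9 : Commute u₂ u₃) :
    x * y = y * x := by
  have h1 : x = 1 - u₁ - u₄ := by rw [← e1]; abel
  have h2 : y = 1 - u₂ - u₄ := by rw [← e2]; abel
  subst h1 h2
  simp only [sub_mul, mul_sub, one_mul, mul_one, c7.eq, c3.eq, c6.eq]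
  abel
end

section
/- Let a 2-SAT instance be a conjunction of clauses each of which is a disjunction of at most two literals over variables x_1,...,x_n. If there exist self-adjoint projections X_1,...,X_n on a finite-dimensional Hilbert space (with X_j^2 = X_j) such that projections of variables in a common clause commute and each clause is satisfied as an operator identity (e.g., a clause x_i ∨ x_j becomes (I - X_i)(I - X_j) = 0, with literals ¬x replaced by I - X), then the 2-SAT instance is classically satisfiable. -/
open Matrix

/-- A literal is a variable index together with a sign (`true` = positive). -/
abbrev Lit (n : ℕ) := Fin n × Bool

/-- The operator of a literal: `X i` for a positive literal, `I - X i` for a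
negative one. -/
def litOp {n d : ℕ} (X : Fin n → Matrix (Fin d) (Fin d) ℂ) (l : Lit n) :
    Matrix (Fin d) (Fin d) ℂ :=
  if l.2 then X l.1 else 1 - X l.1

/-- The Boolean value of a literal under an assignment. -/
def litVal {n : ℕ} (a : Fin n → Bool) (l : Lit n) : Bool :=
  if l.2 then a l.1 else ! a l.1

/-!
Pick a vector `w` in which no `X i` has expectation exactly `‖w‖² / 2`: this is possible because
each `2 X i - 1` is a nonzero Hermitian matrix (a symmetry), so the bad vectors form finitely many
proper real quadrics. Make `x i` true iff `⟪w, X i w⟫ > ‖w‖² / 2`. If a clause `l₁ ∨ l₂` were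
violated, the projections `1 - L₁`, `1 - L₂` onto the subspaces falsifying its literals would both
have expectation above `‖w‖² / 2`; but `(1 - L₁) (1 - L₂) = 0` makes their sum a projection, whose
expectation is at most `‖w‖²`.
-/

section QuadForm

open scoped ComplexOrder

variable {𝕜 m : Type*} [RCLike 𝕜] [Fintype m]

noncomputable def quadForm (A : Matrix m m 𝕜) (w : m → 𝕜) : ℝ :=
  RCLike.re (star w ⬝ᵥ A *ᵥ w)

lemma quadForm_add (A B : Matrix m m 𝕜) (w : m → 𝕜) :
    quadForm (A + B) w = quadForm A w + quadForm B w := by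
  simp [quadForm, add_mulVec, dotProduct_add]

lemma quadForm_sub (A B : Matrix m m 𝕜) (w : m → 𝕜) :
    quadForm (A - B) w = quadForm A w - quadForm B w := by
  simp [quadForm, sub_mulVec, dotProduct_sub]

lemma quadForm_add_smul (A : Matrix m m 𝕜) (w u : m → 𝕜) (t : ℝ) :
    quadForm A (w + (t : 𝕜) • u) = quadForm A w
      + t * RCLike.re (star u ⬝ᵥ A *ᵥ w + star w ⬝ᵥ A *ᵥ u) + t ^ 2 * quadForm A u := by
  have hexpand : star (w + (t : 𝕜) • u) ⬝ᵥ A *ᵥ (w + (t : 𝕜) • u)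
      = star w ⬝ᵥ A *ᵥ w + (t : 𝕜) * (star u ⬝ᵥ A *ᵥ w + star w ⬝ᵥ A *ᵥ u)
        + ((t ^ 2 : ℝ) : 𝕜) * (star u ⬝ᵥ A *ᵥ u) := by
    simp only [star_add, star_smul, mulVec_add, mulVec_smul, dotProduct_add, add_dotProduct,
      smul_dotProduct, dotProduct_smul, smul_eq_mul, RCLike.star_def, RCLike.conj_ofReal]
    push_cast
    ring
  simp only [quadForm, hexpand, map_add, RCLike.re_ofReal_mul]

/-- Along the line `w + t u` the form is a quadratic polynomial in `t`. -/
lemma finite_setOf_quadForm_add_smul_eq_zero {A : Matrix m m 𝕜} {w u : m → 𝕜}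
    (h : quadForm A w ≠ 0 ∨ quadForm A u ≠ 0) :
    {t : ℝ | quadForm A (w + (t : 𝕜) • u) = 0}.Finite := by
  open Polynomial in
  set p : ℝ[X] := C (quadForm A w)
    + C (RCLike.re (star u ⬝ᵥ A *ᵥ w + star w ⬝ᵥ A *ᵥ u)) * X + C (quadForm A u) * X ^ 2
  have hp : p ≠ 0 := by
    intro hp
    rcases h with h | h
    · exact h (by simpa [p] using congrArg (coeff · 0) hp)
    · exact h (by simpa [p] using congrArg (coeff · 2) hp)
  refine (finite_setOfPred_isRoot hp).subset fun t ht => ?_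
  simp only [Set.mem_ofPred_eq, quadForm_add_smul] at ht
  simp only [Set.mem_ofPred_eq, p, IsRoot, eval_add, eval_mul, eval_C, eval_X, eval_pow]
  linarith

lemma exists_quadForm_ne_zero {A : Matrix m m 𝕜} (hA : A.IsHermitian) (h0 : A ≠ 0) :
    ∃ w, quadForm A w ≠ 0 := by
  classical
  obtain ⟨v, t, ht, hv, hAv⟩ := hA.exists_eigenvector_of_ne_zero h0
  have hvv : 0 < RCLike.re (star v ⬝ᵥ v) := by
    simpa using (PosDef.one (n := m) (R := 𝕜)).re_dotProduct_pos hv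
  refine ⟨v, ?_⟩
  rw [quadForm, hAv, dotProduct_smul, RCLike.smul_re]
  exact mul_ne_zero ht hvv.ne'

lemma exists_forall_quadForm_ne_zero {ι : Type*} (s : Finset ι) (A : ι → Matrix m m 𝕜)
    (hA : ∀ i, (A i).IsHermitian) (h0 : ∀ i, A i ≠ 0) :
    ∃ w, ∀ i ∈ s, quadForm (A i) w ≠ 0 := by
  classical
  induction s using Finset.induction_on with
  | empty => exact ⟨0, by simp⟩
  | insert j s _ ih =>
    obtain ⟨w, hw⟩ := ih
    obtain ⟨u, hu⟩ := exists_quadForm_ne_zero (hA j) (h0 j)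
    have hbad : (⋃ i ∈ insert j s, {t : ℝ | quadForm (A i) (w + (t : 𝕜) • u) = 0}).Finite := by
      refine (insert j s).finite_toSet.biUnion fun i hi => ?_
      rcases Finset.mem_insert.mp hi with rfl | hi
      exacts [finite_setOf_quadForm_add_smul_eq_zero (.inr hu),
        finite_setOf_quadForm_add_smul_eq_zero (.inl (hw i hi))]
    obtain ⟨t, ht⟩ := hbad.exists_notMem
    exact ⟨w + (t : 𝕜) • u, fun i hi hzero => ht (Set.mem_biUnion hi hzero)⟩

lemma quadForm_nonneg {P : Matrix m m 𝕜} (hP : IsStarProjection P) (w : m → 𝕜) :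
    0 ≤ quadForm P w := by
  have hPP : P = Pᴴ * P := by
    rw [← star_eq_conjTranspose, hP.isSelfAdjoint.star_eq, hP.isIdempotentElem.eq]
  rw [quadForm, hPP]
  exact (posSemidef_conjTranspose_mul_self P).re_dotProduct_nonneg w

variable [DecidableEq m]

lemma quadForm_two_mul_one_sub_sub_one (P : Matrix m m 𝕜) (w : m → 𝕜) :
    quadForm (2 * (1 - P) - 1) w = -quadForm (2 * P - 1) w := by
  simp only [two_mul, quadForm_sub, quadForm_add]
  ring

/-- `P + Q` is again a projection, so `1 - (P + Q)` has nonnegative form. -/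
lemma quadForm_two_mul_sub_one_add_nonpos {P Q : Matrix m m 𝕜} (hP : IsStarProjection P)
    (hQ : IsStarProjection Q) (hPQ : P * Q = 0) (w : m → 𝕜) :
    quadForm (2 * P - 1) w + quadForm (2 * Q - 1) w ≤ 0 := by
  have h := quadForm_nonneg (hP.add hQ hPQ).one_sub w
  simp only [two_mul, quadForm_sub, quadForm_add] at h ⊢
  linarith

end QuadForm

lemma IsStarProjection.isSelfAdjoint_two_mul_sub_one {R : Type*} [Ring R] [StarRing R] {p : R}
    (hp : IsStarProjection p) : IsSelfAdjoint (2 * p - 1) := by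
  rw [two_mul]
  exact (hp.isSelfAdjoint.add hp.isSelfAdjoint).sub (.one _)

lemma IsStarProjection.two_mul_sub_one_ne_zero {R : Type*} [Ring R] [StarRing R] [Nontrivial R]
    {p : R} (hp : IsStarProjection p) : 2 * p - 1 ≠ 0 :=
  (Unitary.isUnit_coe (U := ⟨_, hp.two_mul_sub_one_mem_unitary⟩)).ne_zero

section Literals

variable {n d : ℕ} {X : Fin n → Matrix (Fin d) (Fin d) ℂ}

lemma isStarProjection_litOp (hX : ∀ i, IsStarProjection (X i)) (l : Lit n) :
    IsStarProjection (litOp X l) := by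
  unfold litOp
  split_ifs
  exacts [hX l.1, (hX l.1).one_sub]

noncomputable def thresholdAssignment (X : Fin n → Matrix (Fin d) (Fin d) ℂ) (w : Fin d → ℂ) :
    Fin n → Bool :=
  fun i => decide (0 < quadForm (2 * X i - 1) w)

lemma quadForm_pos_of_litVal_eq_false {w : Fin d → ℂ}
    (hw : ∀ i, quadForm (2 * X i - 1) w ≠ 0) {l : Lit n}
    (hl : litVal (thresholdAssignment X w) l = false) :
    0 < quadForm (2 * (1 - litOp X l) - 1) w := by
  obtain ⟨i, _ | _⟩ := l
  · simpa [litVal, litOp, thresholdAssignment] using hl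
  · simp only [litVal, litOp, thresholdAssignment, if_true, decide_eq_false_iff_not,
      not_lt] at hl ⊢
    rw [quadForm_two_mul_one_sub_sub_one]
    exact neg_pos.mpr (lt_of_le_of_ne hl (hw i))

end Literals

theorem two_sat_star_eq_two_sat_general {n d : ℕ} (hd : 0 < d)
    (clauses : List (Lit n × Lit n))
    (X : Fin n → Matrix (Fin d) (Fin d) ℂ)
    (h_sa : ∀ i, (X i).IsHermitian)
    (h_proj : ∀ i, X i * X i = X i)
    (h_clause : ∀ c ∈ clauses, (1 - litOp X c.1) * (1 - litOp X c.2) = 0) :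
    ∃ a : Fin n → Bool, ∀ c ∈ clauses, litVal a c.1 = true ∨ litVal a c.2 = true := by
  have hX : ∀ i, IsStarProjection (X i) := fun i => ⟨h_proj i, h_sa i⟩
  have : Nonempty (Fin d) := ⟨⟨0, hd⟩⟩
  obtain ⟨w, hw⟩ := exists_forall_quadForm_ne_zero Finset.univ (fun i => 2 * X i - 1)
    (fun i => (hX i).isSelfAdjoint_two_mul_sub_one) (fun i => (hX i).two_mul_sub_one_ne_zero)
  replace hw i := hw i (Finset.mem_univ i)
  refine ⟨thresholdAssignment X w, fun c hc => ?_⟩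
  by_contra! ⟨hfalse₁, hfalse₂⟩
  have hproj (l : Lit n) := (isStarProjection_litOp hX l).one_sub
  have hpos₁ := quadForm_pos_of_litVal_eq_false hw (Bool.eq_false_iff.mpr hfalse₁)
  have hpos₂ := quadForm_pos_of_litVal_eq_false hw (Bool.eq_false_iff.mpr hfalse₂)
  linarith [quadForm_two_mul_sub_one_add_nonpos (hproj c.1) (hproj c.2) (h_clause c hc) w]

/-- 2-SAT* = 2-SAT: if a 2-SAT instance (a list of clauses, each a disjunction of
two literals) has a quantum satisfying assignment by commuting self-adjoint
projections, then it is classically satisfiable. -/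
theorem two_sat_star_eq_two_sat {n d : ℕ} (hd : 0 < d)
    (clauses : List (Lit n × Lit n))
    (X : Fin n → Matrix (Fin d) (Fin d) ℂ)
    (h_sa : ∀ i, (X i).IsHermitian)
    (h_proj : ∀ i, X i * X i = X i)
    (h_comm : ∀ c ∈ clauses, Commute (X c.1.1) (X c.2.1))
    (h_clause : ∀ c ∈ clauses, (1 - litOp X c.1) * (1 - litOp X c.2) = 0) :
    ∃ a : Fin n → Bool, ∀ c ∈ clauses, litVal a c.1 = true ∨ litVal a c.2 = true :=
  two_sat_star_eq_two_sat_general hd clauses X h_sa h_proj h_clause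
end

section
/- Let H = ∧_{j=1}^m C_j be a HORN-SAT instance (each clause C_j has at most one positive literal) over variables x_1,...,x_n. If there exist self-adjoint projections X_1,...,X_n on a finite-dimensional Hilbert space such that projections of variables occurring in a common clause commute and every clause holds as an operator identity (with x replaced by X, ¬x by I - X, and a clause ¬x_1 ∨ ... ∨ ¬x_k ∨ y requiring X_1···X_k(I - Y) = 0), then H is classically satisfiable. -/
open Matrix

/-- A Horn clause: a list of negatively-occurring variables together with an
optional positive literal (`¬x₁ ∨ ⋯ ∨ ¬x_k ∨ y`, with `y` possibly absent). -/
abbrev HornClause (n : ℕ) := List (Fin n) × Option (Fin n)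

/-- The variables occurring in a Horn clause. -/
def hornVars {n : ℕ} (c : HornClause n) : List (Fin n) := c.1 ++ c.2.toList

/-- HORN-SAT* = HORN-SAT: if a Horn formula has a quantum satisfying assignment by
self-adjoint projections, with the variables of each clause commuting and each
clause `¬x₁ ∨ ⋯ ∨ ¬x_k ∨ y` holding as the operator identity
`X₁⋯X_k (I - Y) = 0` (with the factor `I - Y` replaced by `I` when no positive
literal is present), then it is classically satisfiable. -/
theorem horn_sat_star_eq_horn_sat {n d : ℕ} (hd : 0 < d)
    (clauses : List (HornClause n))
    (X : Fin n → Matrix (Fin d) (Fin d) ℂ)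
    (h_sa : ∀ i, (X i).IsHermitian)
    (h_proj : ∀ i, X i * X i = X i)
    (h_comm : ∀ c ∈ clauses, ∀ i ∈ hornVars c, ∀ j ∈ hornVars c,
      Commute (X i) (X j))
    (h_clause : ∀ c ∈ clauses,
      (c.1.map X).prod * (match c.2 with
        | some y => 1 - X y
        | none => 1) = 0) :
    ∃ a : Fin n → Bool, ∀ c ∈ clauses,
      (∃ i ∈ c.1, a i = false) ∨ (∃ y, c.2 = some y ∧ a y = true) := by
  classical
  set ψ : Fin d → ℂ := fun _ => 1 with hψ
  have hψne : ψ ≠ 0 := by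
    intro h
    have := congrFun h ⟨0, hd⟩
    simp [hψ] at this
  refine ⟨fun i => decide (X i *ᵥ ψ = ψ), ?_⟩
  intro c hc
  by_cases hall : ∀ i ∈ c.1, X i *ᵥ ψ = ψ
  · -- the product fixes ψ
    have hprodgen : ∀ l : List (Fin n), (∀ i ∈ l, X i *ᵥ ψ = ψ) →
        (l.map X).prod *ᵥ ψ = ψ := by
      intro l
      induction l with
      | nil => simp
      | cons i l ih =>
        intro h
        have h1 : X i *ᵥ ψ = ψ := h i (by simp)
        have h2 : (l.map X).prod *ᵥ ψ = ψ := ih (fun j hj => h j (by simp [hj]))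
        simp only [List.map_cons, List.prod_cons]
        rw [← Matrix.mulVec_mulVec, h2, h1]
    have hprod : (c.1.map X).prod *ᵥ ψ = ψ := hprodgen c.1 hall
    have hcl := h_clause c hc
    right
    match hy : c.2 with
    | none =>
      exfalso
      rw [hy] at hcl
      simp only [mul_one] at hcl
      rw [hcl] at hprod
      simp [Matrix.zero_mulVec] at hprod
      exact hψne hprod.symm
    | some y =>
      refine ⟨y, rfl, ?_⟩
      rw [hy] at hcl
      have hcy : Commute ((c.1.map X).prod) (1 - X y) := by
        refine Commute.sub_right (Commute.one_right _) ?_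
        refine Commute.list_prod_left _ _ ?_
        intro x hx
        simp only [List.mem_map] at hx
        obtain ⟨i, hi, rfl⟩ := hx
        exact h_comm c hc i (by simp [hornVars, hi]) y (by simp [hornVars, hy])
      have h0 : (1 - X y) * (c.1.map X).prod = 0 := by
        rw [← hcy]; exact hcl
      have := congrArg (fun M => M *ᵥ ψ) h0
      simp only [Matrix.zero_mulVec, ← Matrix.mulVec_mulVec, hprod] at this
      rw [Matrix.sub_mulVec, Matrix.one_mulVec, sub_eq_zero] at this
      simp [this.symm]
  · push_neg at hall
    obtain ⟨i, hi, hne⟩ := hall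
    exact Or.inl ⟨i, hi, by simp [hne]⟩
end

section
/- Let G be a graph and suppose for each vertex v there is a pair of self-adjoint projections (v_0, v_1) with v_0 + v_1 = I, such that for each edge (u,v) and each color α ∈ {0,1}, u_α v_α = 0. Then G is classically 2-colorable (bipartite). -/
open Matrix

/-- Quantum 2-colorability coincides with classical 2-colorability: if each vertex of
a graph is assigned a pair of complementary self-adjoint projections such that
same-color projections of adjacent vertices multiply to zero, then the graph is
classically 2-colorable. -/
theorem quantum_two_coloring_imp_bipartite {V : Type*} (G : SimpleGraph V)
    {d : ℕ} (hd : 0 < d)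
    (P : V → Fin 2 → Matrix (Fin d) (Fin d) ℂ)
    (h_sa : ∀ v α, (P v α).IsHermitian)
    (h_proj : ∀ v α, P v α * P v α = P v α)
    (h_sum : ∀ v, P v 0 + P v 1 = 1)
    (h_edge : ∀ u v, G.Adj u v → ∀ α, P u α * P v α = 0) :
    ∃ c : V → Fin 2, ∀ u v, G.Adj u v → c u ≠ c v := by
  haveI : Nonempty (Fin d) := ⟨⟨0, hd⟩⟩
  -- along each edge, projections are complementary
  have key : ∀ u v, G.Adj u v → P u 0 = 1 - P v 0 := by
    intro u v huv
    have h0 : P u 0 * P v 0 = 0 := h_edge u v huv 0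
    have h1 : P u 1 * P v 1 = 0 := h_edge u v huv 1
    have hu1 : P u 1 = 1 - P u 0 := eq_sub_of_add_eq' (h_sum u)
    have hv1 : P v 1 = 1 - P v 0 := eq_sub_of_add_eq' (h_sum v)
    rw [hu1, hv1] at h1
    have : (1 : Matrix (Fin d) (Fin d) ℂ) - P u 0 - P v 0 + P u 0 * P v 0 = 0 := by
      calc (1 : Matrix (Fin d) (Fin d) ℂ) - P u 0 - P v 0 + P u 0 * P v 0
          = (1 - P u 0) * (1 - P v 0) := by noncomm_ring
        _ = 0 := h1
    rw [h0, add_zero, sub_sub, sub_eq_zero] at this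
    exact eq_sub_of_add_eq this.symm
  -- no projection equals its complement
  have hne : ∀ (Q : Matrix (Fin d) (Fin d) ℂ), Q * Q = Q → Q ≠ 1 - Q := by
    intro Q hQ h
    have hQ0 : Q = 0 := by
      have : Q * (1 - Q) = 0 := by
        rw [mul_sub, mul_one, hQ, sub_self]
      rw [← h, hQ] at this
      exact this
    rw [hQ0, sub_zero] at h
    exact one_ne_zero h.symm
  -- on any walk the projection is Q or 1 - Q of the start
  have walkP : ∀ (r v : V), G.Walk r v → P v 0 = P r 0 ∨ P v 0 = 1 - P r 0 := by
    intro r v w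
    induction w with
    | nil => exact Or.inl rfl
    | @cons a b c hab p ih =>
      have hba : P b 0 = 1 - P a 0 := by
        have h' := key a b hab
        rw [h', sub_sub_cancel]
      rcases ih with h | h
      · right; rw [h, hba]
      · left; rw [h, hba, sub_sub_cancel]
  classical
  refine ⟨fun v => if P v 0 = P ((G.connectedComponentMk v).out) 0 then 0 else 1, ?_⟩
  intro u v huv hcc
  have hcomp : G.connectedComponentMk u = G.connectedComponentMk v :=
    SimpleGraph.ConnectedComponent.sound huv.reachable
  set r := (G.connectedComponentMk u).out with hr
  have hru : G.Reachable r u := by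
    have := (G.connectedComponentMk u).out_eq
    exact (SimpleGraph.ConnectedComponent.eq.mp this)
  have hrv : G.Reachable r v := hru.trans huv.reachable
  have hu : P u 0 = P r 0 ∨ P u 0 = 1 - P r 0 := hru.elim (fun w => walkP r u w)
  have hv : P v 0 = P r 0 ∨ P v 0 = 1 - P r 0 := hrv.elim (fun w => walkP r v w)
  have huv' : P u 0 = 1 - P v 0 := key u v huv
  have hrQ : P r 0 ≠ 1 - P r 0 := hne _ (h_proj r 0)
  have hout : (G.connectedComponentMk v).out = r := by rw [← hcomp]
  simp only at hcc
  rw [hcomp, hout] at hcc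
  rcases hu with hu0 | hu0 <;> rcases hv with hv0 | hv0
  · rw [hu0, hv0] at huv'; exact hrQ huv'
  · rw [if_pos hu0, if_neg (by rw [hv0]; exact fun h => hrQ h.symm)] at hcc
    exact absurd hcc (by decide)
  · rw [if_neg (by rw [hu0]; exact fun h => hrQ h.symm), if_pos hv0] at hcc
    exact absurd hcc (by decide)
  · rw [hu0, hv0, sub_sub_cancel] at huv'
    exact hrQ huv'.symm
end

section
/- Suppose a 3-SAT instance φ over variables x_1,...,x_n is augmented to φ* by adding, for each pair of variables x_i, x_j not occurring together in any clause of φ, a new clause x_i ∨ x_j ∨ y_{ij} with a fresh variable y_{ij}. If φ* admits a quantum satisfying assignment (self-adjoint projections with variables in a common clause commuting and each clause holding as the operator identity (I−L_1)(I−L_2)(I−L_3) = 0 for its literal operators), then all the projections assigned to x_1, ..., x_n pairwise commute, and φ is classically satisfiable. -/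
open Matrix

/-- A 3-SAT clause: a disjunction of three literals. -/
abbrev Clause3 (n : ℕ) := Lit n × Lit n × Lit n

/-- Whether variable `i` occurs in clause `c`. -/
def occursIn {n : ℕ} (i : Fin n) (c : Clause3 n) : Prop :=
  i = c.1.1 ∨ i = c.2.1.1 ∨ i = c.2.2.1

/-- NP-hardness gadget for 3-SAT*: augment a 3-SAT instance `φ` by a fresh clause
`x_i ∨ x_j ∨ y_{ij}` for every pair of variables not co-occurring in a clause of `φ`.
Any quantum satisfying assignment of the augmented instance `φ*` (projections, with
the variables of each clause—original or gadget—pairwise commuting and each clause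
holding as the operator identity `(I - L₁)(I - L₂)(I - L₃) = 0`) has all projections
of `x₁, …, x_n` pairwise commuting, and `φ` is classically satisfiable. -/
theorem three_sat_gadget_hardness {n d : ℕ} (hd : 0 < d)
    (clauses : List (Clause3 n))
    (X : Fin n → Matrix (Fin d) (Fin d) ℂ)
    (Y : Fin n × Fin n → Matrix (Fin d) (Fin d) ℂ)
    (hX_sa : ∀ i, (X i).IsHermitian) (hX_proj : ∀ i, X i * X i = X i)
    (hY_sa : ∀ p, (Y p).IsHermitian) (hY_proj : ∀ p, Y p * Y p = Y p)
    (h_comm : ∀ c ∈ clauses,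
      Commute (X c.1.1) (X c.2.1.1) ∧ Commute (X c.1.1) (X c.2.2.1) ∧
      Commute (X c.2.1.1) (X c.2.2.1))
    (h_clause : ∀ c ∈ clauses,
      (1 - litOp X c.1) * (1 - litOp X c.2.1) * (1 - litOp X c.2.2) = 0)
    (h_gadget : ∀ i j : Fin n, i ≠ j → (¬ ∃ c ∈ clauses, occursIn i c ∧ occursIn j c) →
      Commute (X i) (X j) ∧ Commute (X i) (Y (i, j)) ∧ Commute (X j) (Y (i, j)) ∧
      (1 - X i) * (1 - X j) * (1 - Y (i, j)) = 0) :
    (∀ i j : Fin n, Commute (X i) (X j)) ∧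
    ∃ a : Fin n → Bool, ∀ c ∈ clauses,
      litVal a c.1 = true ∨ litVal a c.2.1 = true ∨ litVal a c.2.2 = true := by

  classical
  -- Step 1: all X i pairwise commute.
  have hcomm : ∀ i j : Fin n, Commute (X i) (X j) := by
    intro i j
    by_cases hij : i = j
    · subst hij; exact Commute.refl _
    by_cases hco : ∃ c ∈ clauses, occursIn i c ∧ occursIn j c
    · obtain ⟨c, hc, hi, hj⟩ := hco
      obtain ⟨h12, h13, h23⟩ := h_comm c hc
      rcases hi with hi | hi | hi <;> rcases hj with hj | hj | hj <;>
        subst hi <;> subst hj <;>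
        first
          | exact Commute.refl _
          | exact h12 | exact h13 | exact h23
          | exact h12.symm | exact h13.symm | exact h23.symm
    · exact (h_gadget i j hij hco).1
  refine ⟨hcomm, ?_⟩
  -- Step 2: find a common eigenvector of all X i.
  have aux : ∀ m : ℕ, ∃ v : Fin d → ℂ, v ≠ 0 ∧ ∃ a : Fin n → Bool,
      ∀ i : Fin n, (i : ℕ) < m → X i *ᵥ v = (if a i then (1:ℂ) else 0) • v := by
    intro m
    induction m with
    | zero =>
        refine ⟨fun _ => 1, ?_, fun _ => true, fun i hi => absurd hi (Nat.not_lt_zero _)⟩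
        intro h
        have := congrFun h ⟨0, hd⟩
        simp at this
    | succ m ih =>
        obtain ⟨v, hv, a, ha⟩ := ih
        by_cases hm : m < n
        · set im : Fin n := ⟨m, hm⟩ with him
          by_cases h0 : X im *ᵥ v = 0
          · refine ⟨v, hv, Function.update a im false, fun i hi => ?_⟩
            by_cases hi' : (i : ℕ) = m
            · have : i = im := Fin.ext hi'
              subst this
              simp [Function.update_self, h0]
            · have hne : i ≠ im := fun h => hi' (by simpa [him] using congrArg Fin.val h)
              rw [Function.update_of_ne hne]
              exact ha i (lt_of_le_of_ne (Nat.lt_succ_iff.mp hi) hi')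
          · refine ⟨X im *ᵥ v, h0, Function.update a im true, fun i hi => ?_⟩
            by_cases hi' : (i : ℕ) = m
            · have : i = im := Fin.ext hi'
              subst this
              simp only [Function.update_self, if_pos, one_smul]
              rw [Matrix.mulVec_mulVec, hX_proj]
            · have hne : i ≠ im := fun h => hi' (by simpa [him] using congrArg Fin.val h)
              rw [Function.update_of_ne hne, Matrix.mulVec_mulVec,
                (hcomm i im).eq, ← Matrix.mulVec_mulVec, ha i
                  (lt_of_le_of_ne (Nat.lt_succ_iff.mp hi) hi'),
                Matrix.mulVec_smul]
        · exact ⟨v, hv, a, fun i hi => ha i (lt_of_lt_of_le i.isLt (Nat.not_lt.mp hm))⟩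
  obtain ⟨v, hv, a, ha⟩ := aux n
  have ha' : ∀ i : Fin n, X i *ᵥ v = (if a i then (1:ℂ) else 0) • v :=
    fun i => ha i i.isLt
  refine ⟨a, fun c hc => ?_⟩
  by_contra hfalse
  push_neg at hfalse
  obtain ⟨h1, h2, h3⟩ := hfalse
  -- each false literal gives (1 - litOp) *ᵥ v = v
  have key : ∀ l : Lit n, litVal a l ≠ true → (1 - litOp X l) *ᵥ v = v := by
    intro l hl
    rcases l with ⟨i, b⟩
    cases b
    · -- negative literal, litVal = !a i ≠ true, so a i = true
      have hai : a i = true := by simpa [litVal] using hl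
      simp only [litOp, if_neg Bool.false_ne_true]
      rw [sub_sub_cancel, ha' i, hai, if_pos rfl, one_smul]
    · have hai : a i = false := by simpa [litVal] using hl
      simp only [litOp, if_pos]
      rw [Matrix.sub_mulVec, Matrix.one_mulVec, ha' i, hai, if_neg Bool.false_ne_true,
        zero_smul, sub_zero]
  have := congrArg (fun M => M *ᵥ v) (h_clause c hc)
  simp only [Matrix.zero_mulVec] at this
  rw [← Matrix.mulVec_mulVec, ← Matrix.mulVec_mulVec, key _ h3, key _ h2, key _ h1] at this
  exact hv this
end
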